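/- The infinite series ∑_{k=0}^∞ (k!·(2k)!/(3k+2)!)·(5k+3)/2^k converges to π/2. -/

import Mathlib

/-!
With `t(x) = x (1 - x)² / 2`, put `I n = ∫₀¹ 2 t(x)ⁿ / (1 + x²) dx`. Since
`2 - x (1 - x)² = (1 + x²)(2 - x)`, the difference `I n - I (n + 1)` is the polynomial integral
`∫₀¹ xⁿ (1 - x)²ⁿ (2 - x) / 2ⁿ dx`, which Beta integrals evaluate to the `n`-th term of the series.
The partial sums therefore telescope to `I 0 - I N = π / 2 - I N`, and `I N ≤ 2 (2 / 27)ᴺ` because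
`t ≤ 2 / 27` on `[0, 1]`.
-/

open Filter Finset Real
open scoped Nat

lemma integral_pow_mul_one_sub_pow (a b : ℕ) :
    ∫ x in (0:ℝ)..1, x ^ a * (1 - x) ^ b = (a ! * b ! / (a + b + 1)! : ℝ) := by
  have h := Complex.betaIntegral_eq_Gamma_mul_div (a + 1) (b + 1)
    (by norm_cast; omega) (by norm_cast; omega)
  simp only [Complex.betaIntegral, add_sub_cancel_right, Complex.cpow_natCast] at h
  rw [show (a + 1 + (b + 1) : ℂ) = ((a + b + 1 : ℕ) : ℂ) + 1 by push_cast; ring,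
    Complex.Gamma_nat_eq_factorial, Complex.Gamma_nat_eq_factorial,
    Complex.Gamma_nat_eq_factorial] at h
  apply Complex.ofReal_injective
  rw [← intervalIntegral.integral_ofReal]
  push_cast at h ⊢
  exact h

lemma mul_one_sub_sq_le {x : ℝ} (hx : x ≤ 1) : x * (1 - x) ^ 2 ≤ 4 / 27 := by
  nlinarith [sq_nonneg (x - 1 / 3)]

noncomputable def tailIntegral (n : ℕ) : ℝ :=
  ∫ x in (0:ℝ)..1, 2 * (x * (1 - x) ^ 2 / 2) ^ n / (1 + x ^ 2)

lemma tailIntegral_zero : tailIntegral 0 = π / 2 := by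
  simp only [tailIntegral, pow_zero, mul_one, div_eq_mul_one_div (2 : ℝ),
    intervalIntegral.integral_const_mul, integral_one_div_one_add_sq, arctan_one, arctan_zero]
  ring

lemma tendsto_tailIntegral_atTop : Tendsto tailIntegral atTop (nhds 0) := by
  have hbound (n : ℕ) : ‖tailIntegral n‖ ≤ 2 * (2 / 27) ^ n * |1 - 0| := by
    refine intervalIntegral.norm_integral_le_of_norm_le_const fun x hx => ?_
    rw [Set.uIoc_of_le zero_le_one] at hx
    have ht : 0 ≤ x * (1 - x) ^ 2 / 2 := by have := hx.1.le; positivity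
    have ht' : x * (1 - x) ^ 2 / 2 ≤ 2 / 27 := by linarith [mul_one_sub_sq_le hx.2]
    rw [Real.norm_of_nonneg (by positivity)]
    calc 2 * (x * (1 - x) ^ 2 / 2) ^ n / (1 + x ^ 2)
        ≤ 2 * (x * (1 - x) ^ 2 / 2) ^ n := div_le_self (by positivity) (by nlinarith)
      _ ≤ 2 * (2 / 27) ^ n := by gcongr
  refine squeeze_zero_norm hbound ?_
  simpa using (tendsto_pow_atTop_nhds_zero_of_lt_one (by norm_num : (0:ℝ) ≤ 2 / 27)
    (by norm_num)).const_mul 2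

lemma tailIntegrand_sub_succ (n : ℕ) (x : ℝ) :
    2 * (x * (1 - x) ^ 2 / 2) ^ n / (1 + x ^ 2)
        - 2 * (x * (1 - x) ^ 2 / 2) ^ (n + 1) / (1 + x ^ 2)
      = (2 * (x ^ n * (1 - x) ^ (2 * n)) - x ^ (n + 1) * (1 - x) ^ (2 * n)) / 2 ^ n := by
  have hx : 1 + x ^ 2 ≠ 0 := by positivity
  have hpow : (x * (1 - x) ^ 2 / 2) ^ n = x ^ n * (1 - x) ^ (2 * n) / 2 ^ n := by
    rw [div_pow, mul_pow, ← pow_mul]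
  rw [pow_succ (x * (1 - x) ^ 2 / 2), hpow]
  field_simp
  ring

lemma two_mul_factorial_ratio_sub_factorial_ratio (k : ℕ) :
    (2 * (k ! * (2 * k)! / (3 * k + 1)!) - (k + 1)! * (2 * k)! / (3 * k + 2)! : ℝ)
      = k ! * (2 * k)! / (3 * k + 2)! * (5 * k + 3) := by
  rw [show 3 * k + 2 = 3 * k + 1 + 1 by rfl, Nat.factorial_succ (3 * k + 1), Nat.factorial_succ k]
  have : ((3 * k + 1)! : ℝ) ≠ 0 := by positivity
  push_cast
  field_simp
  ring

lemma tailIntegral_sub_succ (k : ℕ) :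
    tailIntegral k - tailIntegral (k + 1)
      = (k ! : ℝ) * (2 * k)! / (3 * k + 2)! * (5 * k + 3) / 2 ^ k := by
  have hpoly (a b : ℕ) :
      IntervalIntegrable (fun x : ℝ => x ^ a * (1 - x) ^ b) MeasureTheory.volume 0 1 :=
    (by fun_prop : Continuous _).intervalIntegrable _ _
  have hintegrand (n : ℕ) : IntervalIntegrable
      (fun x : ℝ => 2 * (x * (1 - x) ^ 2 / 2) ^ n / (1 + x ^ 2)) MeasureTheory.volume 0 1 :=
    (continuous_const.mul (by fun_prop)).div (by fun_prop) (fun x => by positivity)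
      |>.intervalIntegrable _ _
  rw [tailIntegral, tailIntegral,
    ← intervalIntegral.integral_sub (hintegrand k) (hintegrand (k + 1))]
  simp_rw [tailIntegrand_sub_succ]
  rw [intervalIntegral.integral_div,
    intervalIntegral.integral_sub ((hpoly _ _).const_mul 2) (hpoly _ _),
    intervalIntegral.integral_const_mul, integral_pow_mul_one_sub_pow,
    integral_pow_mul_one_sub_pow, show k + 2 * k + 1 = 3 * k + 1 by ring,
    show k + 1 + 2 * k + 1 = 3 * k + 2 by ring, two_mul_factorial_ratio_sub_factorial_ratio]

theorem stmt7 :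
    Tendsto (fun N => ∑ k ∈ range N,
      (Nat.factorial k : ℝ) * (Nat.factorial (2 * k) : ℝ) /
        (Nat.factorial (3 * k + 2) : ℝ) * (5 * (k : ℝ) + 3) / 2 ^ k)
      atTop (nhds (Real.pi / 2)) := by
  have hsum (N : ℕ) : ∑ k ∈ range N,
      (Nat.factorial k : ℝ) * (Nat.factorial (2 * k) : ℝ) /
        (Nat.factorial (3 * k + 2) : ℝ) * (5 * (k : ℝ) + 3) / 2 ^ k
        = tailIntegral 0 - tailIntegral N := by
    rw [← sum_range_sub']
    exact sum_congr rfl fun k _ => (tailIntegral_sub_succ k).symm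
  simp_rw [hsum, tailIntegral_zero]
  simpa using tendsto_tailIntegral_atTop.const_sub (π / 2)
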